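/- arXiv:1301.6457 — 7 statements merged into one kernel-verified Lean document; each statement's English description precedes it below -/
import Mathlib

section
/- For ordinals α, β below ω^ω with Cantor normal forms α = Σ a_i ω^i and β = Σ b_i ω^i, the equality α + β = α ⨣ β holds if and only if the degree of β (the largest i with b_i ≠ 0) is at most the order of α (the smallest i with a_i ≠ 0), provided both are nonzero. -/
universe u

namespace Ordinal

/-- Natural (Hessenberg) addition of ordinals, as formerly in Mathlib's
`Mathlib/SetTheory/Ordinal/NaturalOps.lean` (removed from Mathlib since). -/
noncomputable def nadd (a b : Ordinal.{u}) : Ordinal.{u} :=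
  max (⨆ x : Set.Iio a, Order.succ (nadd x.1 b)) (⨆ x : Set.Iio b, Order.succ (nadd a x.1))
termination_by (a, b)
decreasing_by all_goals cases x; decreasing_tactic

end Ordinal

infixl:65 " ♯ " => Ordinal.nadd

open Ordinal

/-- The ordinal `ω^d * a_d + ... + ω * a_1 + a_0`, i.e. the ordinal below `ω^ω` with
Cantor normal form given by the natural-number coefficients `a 0, ..., a d`. -/
noncomputable def cnf (d : ℕ) (a : ℕ → ℕ) : Ordinal :=
  ((List.range (d + 1)).reverse.map (fun i => ω ^ i * (a i : Ordinal))).sum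

/-!
Below `ω ^ (e + 1)` every ordinal is `ω ^ e * p + r` with `p` finite and `r < ω ^ e`, and natural
addition acts on these pairs by `(ω ^ e * p + r) ♯ (ω ^ e * q + s) = ω ^ e * (p + q) + (r ♯ s)`,
that is, coefficientwise on Cantor normal forms. Ordinary addition differs only in that the leading
term `ω ^ e * b_e` of `β` absorbs every term of `α` below `ω ^ e`. Peeling off the top exponent,
`α + β = α ♯ β` therefore reduces to the same question for the tails when `b_e = 0`, and to the
vanishing of the part of `α` below `ω ^ e` when `b_e ≠ 0`.
-/

namespace Ordinal

theorem nadd_def (a b : Ordinal.{u}) : a ♯ b =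
    max (⨆ x : Set.Iio a, Order.succ (x.1 ♯ b)) (⨆ x : Set.Iio b, Order.succ (a ♯ x.1)) := by
  rw [nadd]

theorem nadd_le_iff {a b c : Ordinal.{u}} :
    a ♯ b ≤ c ↔ (∀ a' < a, a' ♯ b < c) ∧ ∀ b' < b, a ♯ b' < c := by
  rw [nadd_def, max_le_iff, Ordinal.iSup_le_iff, Ordinal.iSup_le_iff]
  simp only [Order.succ_le_iff, Subtype.forall, Set.mem_Iio]

theorem lt_nadd_iff {a b c : Ordinal.{u}} :
    c < a ♯ b ↔ (∃ a' < a, c ≤ a' ♯ b) ∨ ∃ b' < b, c ≤ a ♯ b' := by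
  rw [← not_le, nadd_le_iff]
  simp only [not_and_or, not_forall, not_lt, exists_prop]

theorem nadd_lt_nadd_right {a b : Ordinal.{u}} (h : a < b) (c : Ordinal.{u}) : a ♯ c < b ♯ c :=
  lt_nadd_iff.2 (Or.inl ⟨a, h, le_rfl⟩)

theorem nadd_lt_nadd_left {a b : Ordinal.{u}} (h : a < b) (c : Ordinal.{u}) : c ♯ a < c ♯ b :=
  lt_nadd_iff.2 (Or.inr ⟨a, h, le_rfl⟩)

theorem nadd_comm (a b : Ordinal.{u}) : a ♯ b = b ♯ a := by
  induction a using WellFoundedLT.induction generalizing b with | _ a iha =>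
  induction b using WellFoundedLT.induction with | _ b ihb =>
  rw [nadd_def, nadd_def b, max_comm]
  congr 1 <;> refine iSup_congr fun x => ?_
  · rw [ihb x.1 x.2]
  · rw [iha x.1 x.2]

theorem le_nadd_self (a b : Ordinal.{u}) : a ≤ a ♯ b := by
  induction a using WellFoundedLT.induction with | _ a ih =>
  exact le_of_forall_lt fun c hc => (ih c hc).trans_lt (nadd_lt_nadd_right hc b)

@[simp] theorem nadd_zero (a : Ordinal.{u}) : a ♯ 0 = a := by
  induction a using WellFoundedLT.induction with | _ a ih =>
  refine le_antisymm (nadd_le_iff.2 ⟨fun a' h => ?_, fun b' h => ?_⟩) (le_nadd_self a 0)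
  · rwa [ih a' h]
  · exact (not_lt_zero h).elim

theorem nadd_eq_right {a b : Ordinal.{u}} : a ♯ b = b ↔ a = 0 := by
  refine ⟨fun h => ?_, fun h => by rw [h, nadd_comm, nadd_zero]⟩
  by_contra ha
  have := nadd_lt_nadd_left (pos_iff_ne_zero.2 ha) b
  rw [nadd_zero, nadd_comm, h] at this
  exact this.false

theorem add_le_nadd (a b : Ordinal.{u}) : a + b ≤ a ♯ b := by
  induction b using WellFoundedLT.induction with | _ b ih =>
  rcases eq_or_ne b 0 with rfl | hb
  · simp
  · refine le_of_forall_lt fun c hc => ?_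
    obtain ⟨d, hd, hcd⟩ := (lt_add_iff hb).1 hc
    exact hcd.trans_lt ((ih d hd).trans_lt (nadd_lt_nadd_left hd a))

section Omega0Pow

variable {e : ℕ}

theorem omega0_pow_mul_add_lt_omega0_pow_mul {p p' : ℕ} {t : Ordinal} (hp : p' < p)
    (ht : t < ω ^ e) : ω ^ e * p' + t < ω ^ e * p :=
  calc ω ^ e * p' + t < ω ^ e * p' + ω ^ e := add_lt_add_right ht _
    _ = ω ^ e * (p' + 1 : ℕ) := by push_cast; rw [mul_add, mul_one]
    _ ≤ ω ^ e * p := mul_le_mul_right (by exact_mod_cast hp) _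

theorem omega0_pow_mul_add_lt_omega0_pow_succ {p : ℕ} {t : Ordinal} (ht : t < ω ^ e) :
    ω ^ e * p + t < ω ^ (e + 1) :=
  (omega0_pow_mul_add_lt_omega0_pow_mul (Nat.lt_succ_self p) ht).trans <| by
    rw [pow_succ]; exact (mul_lt_mul_iff_right₀ (pow_pos omega0_pos e)).2 (natCast_lt_omega0 _)

theorem omega0_pow_mul_add_lt_omega0_pow_mul_add {p p' : ℕ} {t t' : Ordinal}
    (h : p' < p ∨ p' = p ∧ t' < t) (ht' : t' < ω ^ e) : ω ^ e * p' + t' < ω ^ e * p + t := by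
  rcases h with hp | ⟨rfl, ht⟩
  · exact (omega0_pow_mul_add_lt_omega0_pow_mul hp ht').trans_le le_self_add
  · exact add_lt_add_right ht _

theorem exists_eq_omega0_pow_mul_add {x : Ordinal} (hx : x < ω ^ (e + 1)) :
    ∃ p : ℕ, ∃ r < ω ^ e, x = ω ^ e * p + r := by
  have he : (ω : Ordinal) ^ e ≠ 0 := pow_ne_zero e omega0_ne_zero
  rw [pow_succ, lt_mul_iff_div_lt he] at hx
  obtain ⟨p, hp⟩ := lt_omega0.1 hx
  exact ⟨p, x % ω ^ e, mod_lt x he, by rw [← hp, div_add_mod]⟩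

theorem exists_lex_lt_of_lt_omega0_pow_mul_add {p : ℕ} {r x : Ordinal} (hr : r < ω ^ e)
    (hx : x < ω ^ e * p + r) :
    ∃ p' : ℕ, ∃ r' < ω ^ e, x = ω ^ e * p' + r' ∧ (p' < p ∨ p' = p ∧ r' < r) := by
  obtain ⟨p', r', hr', rfl⟩ :=
    exists_eq_omega0_pow_mul_add (hx.trans (omega0_pow_mul_add_lt_omega0_pow_succ hr))
  refine ⟨p', r', hr', rfl, ?_⟩
  rcases lt_trichotomy p' p with hp | rfl | hp
  · exact Or.inl hp
  · exact Or.inr ⟨rfl, (add_lt_add_iff_left _).1 hx⟩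
  · exact (hx.not_gt (omega0_pow_mul_add_lt_omega0_pow_mul_add (Or.inl hp) hr)).elim

theorem nadd_omega0_pow_mul_add_of_closed
    (hclosed : ∀ r s : Ordinal.{u}, r < ω ^ e → s < ω ^ e → r ♯ s < ω ^ e)
    {p q : ℕ} {r s : Ordinal.{u}} (hr : r < ω ^ e) (hs : s < ω ^ e) :
    (ω ^ e * p + r) ♯ (ω ^ e * q + s) = ω ^ e * (p + q : ℕ) + (r ♯ s) := by
  -- Phrased through `x` and `y` so that the induction runs over ordinals, not over decompositions.
  suffices ∀ x y : Ordinal.{u}, ∀ (p q : ℕ) (r s : Ordinal.{u}), r < ω ^ e → s < ω ^ e →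
      x = ω ^ e * p + r → y = ω ^ e * q + s → x ♯ y = ω ^ e * (p + q : ℕ) + (r ♯ s) from
    this _ _ p q r s hr hs rfl rfl
  intro x
  induction x using WellFoundedLT.induction with | _ x ihx =>
  intro y
  induction y using WellFoundedLT.induction with | _ y ihy =>
  rintro p q r s hr hs rfl rfl
  refine le_antisymm (nadd_le_iff.2 ⟨fun x' hx' => ?_, fun y' hy' => ?_⟩) ?_
  · obtain ⟨p', r', hr', rfl, hlex⟩ := exists_lex_lt_of_lt_omega0_pow_mul_add hr hx'
    rw [ihx _ hx' _ p' q r' s hr' hs rfl rfl]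
    refine omega0_pow_mul_add_lt_omega0_pow_mul_add ?_ (hclosed _ _ hr' hs)
    rcases hlex with hp | ⟨rfl, hr'r⟩
    · exact Or.inl (by omega)
    · exact Or.inr ⟨rfl, nadd_lt_nadd_right hr'r s⟩
  · obtain ⟨q', s', hs', rfl, hlex⟩ := exists_lex_lt_of_lt_omega0_pow_mul_add hs hy'
    rw [ihy _ hy' p q' r s' hr hs' rfl rfl]
    refine omega0_pow_mul_add_lt_omega0_pow_mul_add ?_ (hclosed _ _ hr hs')
    rcases hlex with hq | ⟨rfl, hs's⟩
    · exact Or.inl (by omega)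
    · exact Or.inr ⟨rfl, nadd_lt_nadd_left hs's r⟩
  · rcases eq_or_ne (r ♯ s) 0 with h0 | h0
    · rw [h0, add_zero]
      calc ω ^ e * (p + q : ℕ) = ω ^ e * p + ω ^ e * q := by push_cast; rw [mul_add]
        _ ≤ ω ^ e * p + r + (ω ^ e * q + s) := add_le_add le_self_add le_self_add
        _ ≤ _ := add_le_nadd _ _
    refine le_of_forall_lt fun γ hγ => ?_
    obtain ⟨t, ht, hγt⟩ := (lt_add_iff h0).1 hγ
    refine hγt.trans_lt ?_
    rcases lt_nadd_iff.1 ht with ⟨r', hr', htr'⟩ | ⟨s', hs', hts'⟩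
    · have hlt : ω ^ e * p + r' < ω ^ e * p + r := add_lt_add_right hr' _
      calc ω ^ e * (p + q : ℕ) + t ≤ ω ^ e * (p + q : ℕ) + (r' ♯ s) := add_le_add_right htr' _
        _ = (ω ^ e * p + r') ♯ (ω ^ e * q + s) :=
          (ihx _ hlt _ p q r' s (hr'.trans hr) hs rfl rfl).symm
        _ < _ := nadd_lt_nadd_right hlt _
    · have hlt : ω ^ e * q + s' < ω ^ e * q + s := add_lt_add_right hs' _
      calc ω ^ e * (p + q : ℕ) + t ≤ ω ^ e * (p + q : ℕ) + (r ♯ s') := add_le_add_right hts' _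
        _ = (ω ^ e * p + r) ♯ (ω ^ e * q + s') :=
          (ihy _ hlt p q r s' hr (hs'.trans hs) rfl rfl).symm
        _ < _ := nadd_lt_nadd_left hlt _

end Omega0Pow

theorem nadd_lt_omega0_pow {e : ℕ} {r s : Ordinal.{u}} (hr : r < ω ^ e) (hs : s < ω ^ e) :
    r ♯ s < ω ^ e := by
  induction e generalizing r s with
  | zero =>
    rw [pow_zero, Order.lt_one_iff] at hr hs
    simp [hr, hs]
  | succ e ih =>
    obtain ⟨p, r₁, hr₁, rfl⟩ := exists_eq_omega0_pow_mul_add hr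
    obtain ⟨q, s₁, hs₁, rfl⟩ := exists_eq_omega0_pow_mul_add hs
    rw [nadd_omega0_pow_mul_add_of_closed (fun _ _ => ih) hr₁ hs₁]
    exact omega0_pow_mul_add_lt_omega0_pow_succ (ih hr₁ hs₁)

theorem nadd_omega0_pow_mul_add {e p q : ℕ} {r s : Ordinal.{u}} (hr : r < ω ^ e)
    (hs : s < ω ^ e) : (ω ^ e * p + r) ♯ (ω ^ e * q + s) = ω ^ e * (p + q : ℕ) + (r ♯ s) :=
  nadd_omega0_pow_mul_add_of_closed (fun _ _ => nadd_lt_omega0_pow) hr hs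

end Ordinal

noncomputable def cnfBelow : ℕ → (ℕ → ℕ) → Ordinal
  | 0, _ => 0
  | n + 1, a => ω ^ n * a n + cnfBelow n a

theorem cnf_eq_cnfBelow (d : ℕ) (a : ℕ → ℕ) : cnf d a = cnfBelow (d + 1) a := by
  suffices ∀ n, ((List.range n).reverse.map (fun i => ω ^ i * (a i : Ordinal))).sum =
      cnfBelow n a from this (d + 1)
  intro n
  induction n with
  | zero => rfl
  | succ n ih =>
    rw [List.range_succ, List.reverse_append]
    simp only [List.reverse_singleton, List.singleton_append, List.map_cons, List.sum_cons, ih,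
      cnfBelow]

theorem cnfBelow_lt_omega0_pow (n : ℕ) (a : ℕ → ℕ) : cnfBelow n a < ω ^ n := by
  induction n with
  | zero => simp [cnfBelow]
  | succ n ih => exact omega0_pow_mul_add_lt_omega0_pow_succ ih

theorem cnfBelow_eq_zero_iff {n : ℕ} {a : ℕ → ℕ} : cnfBelow n a = 0 ↔ ∀ i < n, a i = 0 := by
  induction n with
  | zero => simp [cnfBelow]
  | succ n ih =>
    rw [Nat.forall_lt_succ_right, ← ih, and_comm]
    simp [cnfBelow]

theorem cnfBelow_add_eq_nadd_iff (n : ℕ) (a b : ℕ → ℕ) :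
    cnfBelow n a + cnfBelow n b = cnfBelow n a ♯ cnfBelow n b ↔
      ∀ i < n, ∀ j < n, b i ≠ 0 → a j ≠ 0 → i ≤ j := by
  induction n with
  | zero => simp [cnfBelow]
  | succ n ih =>
    have hA := cnfBelow_lt_omega0_pow n a
    have hB := cnfBelow_lt_omega0_pow n b
    simp only [cnfBelow]
    rw [nadd_omega0_pow_mul_add hA hB]
    rcases eq_or_ne (b n) 0 with hbn | hbn
    · have hsum : ω ^ n * a n + cnfBelow n a + (ω ^ n * b n + cnfBelow n b) =
          ω ^ n * (a n + b n : ℕ) + (cnfBelow n a + cnfBelow n b) := by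
        simp [hbn, add_assoc]
      rw [hsum, add_right_inj, ih]
      grind
    · have hsum : ω ^ n * a n + cnfBelow n a + (ω ^ n * b n + cnfBelow n b) =
          ω ^ n * (a n + b n : ℕ) + cnfBelow n b := by
        have habsorb : cnfBelow n a + ω ^ n * b n = ω ^ n * b n := by
          refine add_of_omega0_opow_le (b := n) (by rwa [opow_natCast]) ?_
          rw [opow_natCast]
          exact le_mul_left _ (by exact_mod_cast Nat.pos_of_ne_zero hbn)
        rw [add_assoc, ← add_assoc (cnfBelow n a), habsorb, ← add_assoc, ← mul_add, Nat.cast_add]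
      rw [hsum, add_right_inj, eq_comm, nadd_eq_right, cnfBelow_eq_zero_iff]
      constructor
      · intro ha i hi j hj _ haj
        have : ¬j < n := fun hjn => haj (ha j hjn)
        omega
      · intro h j hj
        by_contra haj
        have := h n n.lt_succ_self j (by omega) hbn haj
        omega

theorem add_eq_nadd_iff_general (d : ℕ) (a b : ℕ → ℕ) (α β : Ordinal)
    (hα : α = cnf d a) (hβ : β = cnf d b) :
    α + β = α ♯ β ↔ ∀ i ≤ d, ∀ j ≤ d, b i ≠ 0 → a j ≠ 0 → i ≤ j := by
  subst hα hβ
  simpa only [cnf_eq_cnfBelow, Nat.lt_succ_iff] using cnfBelow_add_eq_nadd_iff (d + 1) a b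

/-- For nonzero ordinals  below  with Cantor normal forms given by the
coefficients  resp. , the ordinary sum  agrees with the natural sum 
if and only if the degree of  (the largest index carrying a nonzero coefficient) is at
most the order of  (the smallest index carrying a nonzero coefficient). -/
theorem add_eq_nadd_iff (d : ℕ) (a b : ℕ → ℕ) (α β : Ordinal)
    (hα : α = cnf d a) (hβ : β = cnf d b) (hα0 : α ≠ 0) (hβ0 : β ≠ 0) :
    α + β = α ♯ β ↔ ∀ i ≤ d, ∀ j ≤ d, b i ≠ 0 → a j ≠ 0 → i ≤ j :=
  add_eq_nadd_iff_general d a b α β hα hβ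
end

section
/- For ordinals α = Σ a_i ω^i and β = Σ b_i ω^i below ω^ω in Cantor normal form, the infimum of α and β with respect to the weaker-than order ⪯ exists and equals Σ min(a_i, b_i) ω^i. -/
open Ordinal

/-- `α` is weaker than `β`: every Cantor coefficient of `α` is at most the
corresponding Cantor coefficient of `β`. -/
def Weaker (α β : Ordinal) : Prop :=
  ∃ (d : ℕ) (a b : ℕ → ℕ), α = cnf d a ∧ β = cnf d b ∧ ∀ i, a i ≤ b i

/-! Cantor coefficients are unique (`Ordinal.CNF.coeff`), so a witness of `γ ⪯ cnf d a` can be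
normalised to a coefficient sequence of `γ` of length `d + 1` lying below `a`; two such witnesses
for `cnf d a` and `cnf d b` coincide, hence lie below `min a b`. -/

lemma cnf_zero (a : ℕ → ℕ) : cnf 0 a = a 0 := by
  simp [cnf, List.range_succ]

lemma cnf_succ (d : ℕ) (a : ℕ → ℕ) :
    cnf (d + 1) a = ω ^ ((d + 1 : ℕ) : Ordinal) * a (d + 1) + cnf d a := by
  rw [opow_natCast]
  simp [cnf, List.range_succ]

lemma cnf_congr {d : ℕ} {a b : ℕ → ℕ} (h : ∀ i ≤ d, a i = b i) : cnf d a = cnf d b := by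
  unfold cnf
  congr 1
  refine List.map_congr_left fun i hi => ?_
  rw [List.mem_reverse, List.mem_range] at hi
  rw [h i (Nat.lt_succ_iff.mp hi)]

lemma cnf_eq_of_le {d e : ℕ} {a : ℕ → ℕ} (hde : d ≤ e) (ha : ∀ i, d < i → a i = 0) :
    cnf e a = cnf d a := by
  induction e with
  | zero => rw [Nat.le_zero.mp hde]
  | succ e ih =>
    rcases hde.eq_or_lt with rfl | hlt
    · rfl
    · rw [cnf_succ, ha (e + 1) hlt, ih (Nat.lt_succ_iff.mp hlt)]
      simp

lemma cnf_lt_omega0_opow {d e : ℕ} (hde : d < e) (a : ℕ → ℕ) : cnf d a < ω ^ (e : Ordinal) := by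
  induction d generalizing e with
  | zero =>
    rw [cnf_zero]
    exact (natCast_lt_omega0 _).trans_le (left_le_opow _ (by exact_mod_cast hde))
  | succ d ih =>
    rw [cnf_succ]
    exact opow_mul_add_lt_opow (natCast_lt_omega0 _) (ih (Nat.lt_succ_self d))
      (by exact_mod_cast hde)

lemma Ordinal.CNF.coeff_omega0_opow_mul_natCast_add {e y : Ordinal} (n : ℕ) (hy : y < ω ^ e) :
    CNF.coeff ω (ω ^ e * n + y) = Finsupp.single e (n : Ordinal) + CNF.coeff ω y := by
  rcases eq_or_ne n 0 with rfl | hn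
  · simp
  · exact CNF.coeff_opow_mul_add one_lt_omega0 (by exact_mod_cast hn) (natCast_lt_omega0 n) hy

lemma coeff_omega0_cnf (d : ℕ) (a : ℕ → ℕ) (i : ℕ) :
    CNF.coeff ω (cnf d a) i = ((if i ≤ d then a i else 0 : ℕ) : Ordinal) := by
  induction d with
  | zero =>
    have h := CNF.coeff_omega0_opow_mul_natCast_add (a 0) (opow_pos 0 omega0_pos)
    simp only [opow_zero, one_mul, add_zero, CNF.coeff_zero_right] at h
    rw [cnf_zero, h, Finsupp.single_apply]
    split_ifs <;> simp_all [eq_comm]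
  | succ d ih =>
    have hlt := cnf_lt_omega0_opow (Nat.lt_succ_self d) a
    rw [cnf_succ, CNF.coeff_omega0_opow_mul_natCast_add _ hlt, Finsupp.add_apply,
      Finsupp.single_apply, ih]
    simp only [Nat.cast_inj]
    split_ifs <;> first | omega | simp_all

lemma ite_eq_ite_of_cnf_eq {d e : ℕ} {a b : ℕ → ℕ} (h : cnf d a = cnf e b) (i : ℕ) :
    (if i ≤ d then a i else 0) = if i ≤ e then b i else 0 := by
  simpa only [coeff_omega0_cnf, Nat.cast_inj] using congrArg (fun x => CNF.coeff ω x i) h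

lemma Weaker.exists_eq_cnf {γ : Ordinal} {d : ℕ} {a : ℕ → ℕ} (h : Weaker γ (cnf d a)) :
    ∃ c : ℕ → ℕ, γ = cnf d c ∧ (∀ i, d < i → c i = 0) ∧ ∀ i, c i ≤ a i := by
  obtain ⟨e, a', b', rfl, hb', hle⟩ := h
  set c : ℕ → ℕ := fun i => if i ≤ e then a' i else 0 with hc
  have hc_le : ∀ i, c i ≤ if i ≤ d then a i else 0 := fun i => by
    rw [ite_eq_ite_of_cnf_eq hb' i]
    dsimp only [c]
    split_ifs
    exacts [hle i, le_rfl]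
  have hc_zero : ∀ i, d < i → c i = 0 := fun i hi =>
    Nat.le_zero.mp (by simpa [hi.not_ge] using hc_le i)
  refine ⟨c, ?_, hc_zero, fun i => (hc_le i).trans ?_⟩
  · calc cnf e a' = cnf e c := cnf_congr fun i hi => by simp [hc, hi]
      _ = cnf (max d e) c :=
        (cnf_eq_of_le (le_max_right d e) fun i hi => by simp [hc, hi.not_ge]).symm
      _ = cnf d c := cnf_eq_of_le (le_max_left d e) hc_zero
  · split_ifs <;> simp

/-- The infimum with respect to the weaker-than order of two ordinals below `ω^ω` in Cantor
normal form exists and is given by the coefficient-wise minimum. -/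
theorem weaker_inf (d : ℕ) (a b : ℕ → ℕ) :
    Weaker (cnf d fun i => min (a i) (b i)) (cnf d a) ∧
    Weaker (cnf d fun i => min (a i) (b i)) (cnf d b) ∧
    ∀ γ : Ordinal, Weaker γ (cnf d a) → Weaker γ (cnf d b) →
      Weaker γ (cnf d fun i => min (a i) (b i)) := by
  refine ⟨⟨d, _, a, rfl, rfl, fun i => min_le_left _ _⟩,
    ⟨d, _, b, rfl, rfl, fun i => min_le_right _ _⟩, fun γ hγa hγb => ?_⟩
  obtain ⟨c, rfl, hc_zero, hca⟩ := hγa.exists_eq_cnf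
  obtain ⟨c', hcc', -, hc'b⟩ := hγb.exists_eq_cnf
  have hcb : ∀ i, c i ≤ b i := fun i => by
    have hi := ite_eq_ite_of_cnf_eq hcc' i
    split_ifs at hi with hid
    · exact hi ▸ hc'b i
    · simp [hc_zero i (not_le.mp hid)]
  exact ⟨d, c, _, rfl, rfl, fun i => le_min (hca i) (hcb i)⟩
end

section
/- Let R be a commutative Noetherian ring, 𝔭 a prime ideal, and M a finitely generated R-module. The length over R_𝔭 of the 𝔭-torsion submodule of M_𝔭 equals the supremum of the lengths of finite-length R_𝔭-submodules of M_𝔭 (the finitistic length of M_𝔭). -/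
/-- The `𝔭`-torsion submodule `H⁰_𝔭(M)` of the localization `M_𝔭`: the elements of
`LocalizedModule 𝔭.primeCompl M` annihilated by some power of `𝔭 R_𝔭`. -/
noncomputable def pTorsion {R : Type*} [CommRing R] (p : Ideal R) [p.IsPrime]
    (M : Type*) [AddCommGroup M] [Module R M] :
    Submodule (Localization.AtPrime p) (LocalizedModule p.primeCompl M) :=
  ⨆ n : ℕ,
    Submodule.torsionBySet (Localization.AtPrime p) (LocalizedModule p.primeCompl M)
      ((Ideal.map (algebraMap R (Localization.AtPrime p)) p ^ n :
        Ideal (Localization.AtPrime p)) : Set (Localization.AtPrime p))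

/-- The length of a module: the Krull dimension of its lattice of submodules
(`⊥` never occurs; the value is `⊤` when there are chains of unbounded length). -/
noncomputable def modLength (A : Type*) (M : Type*) [Ring A] [AddCommGroup M] [Module A M] :
    WithBot ℕ∞ :=
  Order.krullDim (Submodule A M)

/-- The local multiplicity `ℓ_𝔭(M)`: the length over `R_𝔭` of the `𝔭`-torsion submodule
of the localization `M_𝔭`. -/
noncomputable def lmult {R : Type*} [CommRing R] (p : PrimeSpectrum R)
    (M : Type*) [AddCommGroup M] [Module R M] : WithBot ℕ∞ :=
  modLength (Localization.AtPrime p.asIdeal) (pTorsion p.asIdeal M)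

section Aux

open Submodule

variable {A : Type*} [CommRing A] {M₀ : Type*} [AddCommGroup M₀] [Module A M₀]

lemma modLength_mono {N P : Submodule A M₀} (h : N ≤ P) :
    modLength A N ≤ modLength A P :=
  Order.krullDim_le_of_strictMono (Submodule.map (Submodule.inclusion h))
    (Submodule.map_strictMono_of_injective (Submodule.inclusion_injective h))

lemma isArtinian_of_maximal_pow_smul (J : Ideal A) (hJ : J.IsMaximal) :
    ∀ (n : ℕ) (M : Type*) [AddCommGroup M] [Module A M], IsNoetherian A M →
      J ^ n • (⊤ : Submodule A M) = ⊥ → IsArtinian A M := by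
  intro n
  induction n with
  | zero =>
    intro M _ _ _ h
    rw [pow_zero, Ideal.one_eq_top, top_smul] at h
    have hz : ∀ x : M, x = 0 := fun x => (Submodule.mem_bot A).mp (h ▸ Submodule.mem_top)
    have : Subsingleton M := ⟨fun a b => by rw [hz a, hz b]⟩
    exact isArtinian_of_finite
  | succ n ih =>
    intro M _ _ hNoeth h
    haveI := hNoeth
    set K : Submodule A M := J • (⊤ : Submodule A M) with hK
    haveI : Module.Finite A M := Module.finite_def.mpr (IsNoetherian.noetherian ⊤)
    -- the quotient M ⧸ K is a semisimple A-module
    haveI : IsSemisimpleModule A (M ⧸ K) := by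
      letI F := A ⧸ J
      letI : Field F := Ideal.Quotient.field J
      let l : (M ⧸ K) →ₛₗ[Ideal.Quotient.mk J] (M ⧸ K) :=
        { toFun := id, map_add' := fun _ _ => rfl, map_smul' := fun r x => rfl }
      rw [l.isSemisimpleModule_iff_of_bijective Function.bijective_id]
      infer_instance
    haveI : IsArtinian A (M ⧸ K) := inferInstance
    haveI : IsArtinian A K := by
      refine ih K inferInstance ?_
      apply Submodule.map_injective_of_injective K.injective_subtype
      rw [Submodule.map_smul'', Submodule.map_top, Submodule.range_subtype, Submodule.map_bot]
      rw [pow_succ, ← Ideal.smul_eq_mul, Submodule.smul_assoc] at h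
      exact h
    exact isArtinian_of_range_eq_ker K.subtype K.mkQ
      (by rw [Submodule.range_subtype, Submodule.ker_mkQ])

end Aux

section Main

open Submodule

variable {R : Type*} [CommRing R] (p : Ideal R) [p.IsPrime]
  (M : Type*) [AddCommGroup M] [Module R M]

local notation "A" => Localization.AtPrime p
local notation "L" => LocalizedModule p.primeCompl M
local notation "J" => Ideal.map (algebraMap R (Localization.AtPrime p)) p

lemma J_isMaximal : (J).IsMaximal := by
  rw [Localization.AtPrime.map_eq_maximalIdeal]
  exact IsLocalRing.maximalIdeal.isMaximal _

lemma le_pTorsion_of_isFiniteLength (N : Submodule A L)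
    (hN : IsFiniteLength A N) : N ≤ pTorsion p M := by
  obtain ⟨hNoeth, hArt⟩ := isFiniteLength_iff_isNoetherian_isArtinian.mp hN
  intro x hx
  set S : Submodule A N := Submodule.span A {(⟨x, hx⟩ : N)} with hS
  let f : ℕ →o (Submodule A N)ᵒᵈ :=
    ⟨fun k => J ^ k • S, fun a b hab =>
      Submodule.smul_mono (Ideal.pow_le_pow_right hab) le_rfl⟩
  obtain ⟨n, hn⟩ := IsArtinian.monotone_stabilizes f
  have key : J ^ n • S = ⊥ := by
    have h1 : J ^ n • S ≤ J • (J ^ n • S) := by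
      have := hn (n + 1) (Nat.le_succ n)
      change J ^ n • S = J ^ (n + 1) • S at this
      rw [pow_succ', ← Ideal.smul_eq_mul, Submodule.smul_assoc] at this
      exact this.le
    exact Submodule.eq_bot_of_le_smul_of_le_jacobson_bot (J) _
      (IsNoetherian.noetherian _) h1
      (by rw [IsLocalRing.jacobson_eq_maximalIdeal (⊥ : Ideal A) bot_ne_top,
        ← Localization.AtPrime.map_eq_maximalIdeal])
  have hmem : x ∈ Submodule.torsionBySet A L ((J ^ n : Ideal A) : Set A) := by
    rw [Submodule.mem_torsionBySet_iff]
    rintro ⟨a, ha⟩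
    have : a • (⟨x, hx⟩ : N) = 0 := by
      have := Submodule.smul_mem_smul ha (Submodule.mem_span_singleton_self (⟨x, hx⟩ : N))
      rwa [key, Submodule.mem_bot] at this
    exact congrArg Subtype.val this
  exact Submodule.mem_iSup_of_mem n hmem

variable [IsNoetherianRing R] [Module.Finite R M]

lemma pTorsion_isFiniteLength : IsFiniteLength A (pTorsion p M) := by
  haveI : IsNoetherianRing A :=
    IsLocalization.isNoetherianRing p.primeCompl (Localization.AtPrime p) inferInstance
  haveI : Module.Finite A L :=
    Module.Finite.of_isLocalizedModule p.primeCompl (LocalizedModule.mkLinearMap p.primeCompl M)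
  haveI : IsNoetherian A L := inferInstance
  -- the chain of torsion submodules stabilizes
  let g : ℕ →o Submodule A L :=
    ⟨fun k => Submodule.torsionBySet A L ((J ^ k : Ideal A) : Set A), fun a b hab =>
      Submodule.torsionBySet_le_torsionBySet_of_subset (Ideal.pow_le_pow_right hab)⟩
  obtain ⟨n, hn⟩ := monotone_stabilizes_iff_noetherian.mpr inferInstance g
  have hEq : pTorsion p M = g n := by
    refine le_antisymm (iSup_le fun k => ?_) (le_iSup (fun k => g k) n)
    calc g k ≤ g (max k n) := g.monotone (le_max_left k n)
    _ = g n := (hn (max k n) (le_max_right k n)).symm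
  rw [isFiniteLength_iff_isNoetherian_isArtinian]
  refine ⟨inferInstance, ?_⟩
  apply isArtinian_of_maximal_pow_smul (J) (J_isMaximal p) n _ inferInstance
  rw [eq_bot_iff]
  refine Submodule.smul_le.mpr fun a ha y _ => ?_
  have hy : (y : L) ∈ Submodule.torsionBySet A L ((J ^ n : Ideal A) : Set A) := by
    exact hEq.le y.2
  rw [Submodule.mem_bot]
  exact Subtype.ext ((Submodule.mem_torsionBySet_iff _ _).mp hy ⟨a, ha⟩)

end Main

/-- The local multiplicity `ℓ_𝔭(M)` (the `R_𝔭`-length of the `𝔭`-torsion of `M_𝔭`) equals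
the finitistic length of `M_𝔭`: the supremum of the lengths of its finite-length
`R_𝔭`-submodules. -/
theorem lmult_eq_finitistic_length {R : Type*} [CommRing R] [IsNoetherianRing R]
    (M : Type*) [AddCommGroup M] [Module R M] [Module.Finite R M] (p : PrimeSpectrum R) :
    lmult p M =
      ⨆ (N : Submodule (Localization.AtPrime p.asIdeal)
          (LocalizedModule p.asIdeal.primeCompl M))
        (_ : IsFiniteLength (Localization.AtPrime p.asIdeal) N),
        modLength (Localization.AtPrime p.asIdeal) N := by
  have hFL := pTorsion_isFiniteLength p.asIdeal M
  refine le_antisymm ?_ ?_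
  · exact le_iSup₂ (f := fun (N : Submodule (Localization.AtPrime p.asIdeal)
        (LocalizedModule p.asIdeal.primeCompl M))
      (_ : IsFiniteLength (Localization.AtPrime p.asIdeal) N) =>
        modLength (Localization.AtPrime p.asIdeal) N) (pTorsion p.asIdeal M) hFL
  · exact iSup₂_le fun N hN =>
      modLength_mono (le_pTorsion_of_isFiniteLength p.asIdeal M N hN)
end

section
/- Let R be a commutative Noetherian ring and f : M → Q a surjective but not injective homomorphism of finitely generated R-modules. Then there exists an associated prime 𝔭 of M such that the length of the 𝔭-torsion of Q_𝔭 is strictly less than the length of the 𝔭-torsion of M_𝔭, while for every prime 𝔮 not in the support of ker f, the 𝔭-torsion lengths of M_𝔮 and Q_𝔮 agree. -/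
open IsLocalRing Submodule

section powTorsion

variable {A : Type*} [CommRing A] (I : Ideal A)
variable {X Y : Type*} [AddCommGroup X] [Module A X] [AddCommGroup Y] [Module A Y]

variable (X) in
noncomputable def powTorsion : Submodule A X :=
  ⨆ n : ℕ, torsionBySet A X ↑(I ^ n)

lemma torsionBySet_pow_mono : Monotone fun n : ℕ ↦ torsionBySet A X ↑(I ^ n) :=
  fun _ _ h ↦ torsionBySet_le_torsionBySet_of_subset (Ideal.pow_le_pow_right h)

lemma mem_powTorsion_iff {x : X} : x ∈ powTorsion I X ↔ ∃ n, x ∈ torsionBySet A X ↑(I ^ n) :=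
  mem_iSup_of_directed _ (torsionBySet_pow_mono I).directed_le

lemma exists_powTorsion_eq_torsionBySet [IsNoetherian A X] :
    ∃ n, powTorsion I X = torsionBySet A X ↑(I ^ n) :=
  ⟨_, WellFoundedGT.iSup_eq_monotonicSequenceLimit ⟨_, torsionBySet_pow_mono I⟩⟩

lemma torsionBySet_pow_le_powTorsion (n : ℕ) : torsionBySet A X ↑(I ^ n) ≤ powTorsion I X :=
  le_iSup (fun n : ℕ ↦ torsionBySet A X ↑(I ^ n)) n

lemma mapsTo_powTorsion (g : X →ₗ[A] Y) : ∀ x ∈ powTorsion I X, g x ∈ powTorsion I Y := by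
  simp only [mem_powTorsion_iff, mem_torsionBySet_iff]
  rintro x ⟨n, hx⟩
  exact ⟨n, fun a ↦ by rw [← map_smul, hx a, map_zero]⟩

lemma surjective_restrict_powTorsion {g : X →ₗ[A] Y} (hg : Function.Surjective g) {k : ℕ}
    (hker : LinearMap.ker g ≤ torsionBySet A X ↑(I ^ k)) :
    Function.Surjective (g.restrict (mapsTo_powTorsion I g)) := by
  rintro ⟨y, hy⟩
  obtain ⟨n, hn⟩ := (mem_powTorsion_iff I).mp hy
  obtain ⟨x, rfl⟩ := hg y
  -- `I ^ n` moves `x` into `ker g`, which `I ^ k` kills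
  have hx : x ∈ torsionBySet A X ↑(I ^ (k + n)) := by
    rw [mem_torsionBySet_iff]
    rintro ⟨a, ha⟩
    change a • x = 0
    rw [SetLike.mem_coe, pow_add] at ha
    refine Submodule.mul_induction_on ha (fun b hb c hc ↦ ?_)
      fun a₁ a₂ h₁ h₂ ↦ by rw [add_smul, h₁, h₂, add_zero]
    have hcx : c • x ∈ LinearMap.ker g := by
      rw [LinearMap.mem_ker, map_smul]; exact (mem_torsionBySet_iff _ _).mp hn ⟨c, hc⟩
    rw [mul_smul]
    exact (mem_torsionBySet_iff _ _).mp (hker hcx) ⟨b, hb⟩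
  exact ⟨⟨x, (mem_powTorsion_iff I).mpr ⟨_, hx⟩⟩, rfl⟩

lemma ker_restrict_powTorsion_ne_bot {g : X →ₗ[A] Y} (hle : LinearMap.ker g ≤ powTorsion I X)
    (hne : LinearMap.ker g ≠ ⊥) : LinearMap.ker (g.restrict (mapsTo_powTorsion I g)) ≠ ⊥ := by
  rw [LinearMap.ker_restrict, Ne, ← disjoint_iff_comap_eq_bot]
  exact fun h ↦ hne (h.symm.eq_bot_of_le hle)

end powTorsion

lemma isArtinian_of_isTorsionBySet_maximalIdeal_pow {A X : Type*} [CommRing A] [IsNoetherianRing A]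
    [IsLocalRing A] [AddCommGroup X] [Module A X] [Module.Finite A X] {n : ℕ}
    (h : Module.IsTorsionBySet A X ↑(maximalIdeal A ^ n)) : IsArtinian A X := by
  -- `maximalIdeal A ^ 0 = ⊤` has no minimal primes, hence the shift to `n + 1`
  have h' : Module.IsTorsionBySet A X ↑(maximalIdeal A ^ (n + 1)) :=
    Module.isTorsionBySet_of_subset (Ideal.pow_le_pow_right n.le_succ) h
  have : IsArtinianRing (A ⧸ maximalIdeal A ^ (n + 1)) := by
    refine quotient_artinian_of_mem_minimalPrimes_of_isLocalRing _ ?_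
    rw [← Ideal.radical_minimalPrimes, Ideal.radical_pow (maximalIdeal A) n.succ_ne_zero,
      (maximalIdeal.isMaximal A).isPrime.radical, Ideal.minimalPrimes_eq_subsingleton_self]
    rfl
  let := h'.module
  have := h'.isScalarTower (S := A)
  have : Module.Finite (A ⧸ maximalIdeal A ^ (n + 1)) X :=
    Module.Finite.of_restrictScalars_finite A _ X
  exact isArtinian_of_surjective_algebraMap (R := A ⧸ maximalIdeal A ^ (n + 1))
    Ideal.Quotient.mk_surjective

lemma Module.length_lt_of_surjective {A X Y : Type*} [Ring A] [AddCommGroup X] [Module A X]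
    [AddCommGroup Y] [Module A Y] [IsArtinian A X] [IsNoetherian A X] {g : X →ₗ[A] Y}
    (hg : Function.Surjective g) (hker : LinearMap.ker g ≠ ⊥) :
    Module.length A Y < Module.length A X :=
  (g.quotKerEquivOfSurjective hg).length_eq ▸ (LinearMap.ker g).length_quotient_lt hker

lemma isArtinian_powTorsion_maximalIdeal {A X : Type*} [CommRing A] [IsNoetherianRing A]
    [IsLocalRing A] [AddCommGroup X] [Module A X] [Module.Finite A X] :
    IsArtinian A (powTorsion (maximalIdeal A) X) := by
  obtain ⟨n, hn⟩ := exists_powTorsion_eq_torsionBySet (maximalIdeal A) (X := X)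
  rw [hn]
  exact isArtinian_of_isTorsionBySet_maximalIdeal_pow (torsionBySet_isTorsionBySet _)

section Localization

variable {R : Type*} [CommRing R]
variable {N M Q : Type*} [AddCommGroup N] [Module R N] [AddCommGroup M] [Module R M]
  [AddCommGroup Q] [Module R Q]

lemma annihilator_le_annihilator_localizedModule (S : Submonoid R) :
    Module.annihilator R N ≤ Module.annihilator R (LocalizedModule S N) := by
  intro r hr
  rw [Module.mem_annihilator] at hr ⊢
  intro z
  induction z using LocalizedModule.induction_on with
  | _ n s => rw [LocalizedModule.smul'_mk, hr, LocalizedModule.zero_mk]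

lemma exists_maximalIdeal_pow_le_annihilator_localizedModule [IsNoetherianRing R] {P : Ideal R}
    [P.IsPrime] (hP : P ∈ (Module.annihilator R N).minimalPrimes) :
    ∃ k, maximalIdeal (Localization.AtPrime P) ^ k ≤
      Module.annihilator (Localization.AtPrime P) (LocalizedModule P.primeCompl N) := by
  refine Ideal.exists_pow_le_of_le_radical_of_fg ?_ (IsNoetherian.noetherian _)
  rw [Ideal.radical_eq_sInf]
  refine le_sInf fun q ⟨hann, hq⟩ ↦ ?_
  have hle : Module.annihilator R N ≤ q.comap (algebraMap R (Localization.AtPrime P)) :=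
    calc Module.annihilator R N
      _ ≤ Module.annihilator R (LocalizedModule P.primeCompl N) :=
          annihilator_le_annihilator_localizedModule _
      _ = (Module.annihilator _ (LocalizedModule P.primeCompl N)).comap
            (algebraMap R (Localization.AtPrime P)) := Module.comap_annihilator.symm
      _ ≤ q.comap _ := Ideal.comap_mono hann
  have hge : q.comap (algebraMap R (Localization.AtPrime P)) ≤ P :=
    calc q.comap _
      _ ≤ (maximalIdeal _).comap (algebraMap R (Localization.AtPrime P)) :=
          Ideal.comap_mono (le_maximalIdeal hq.ne_top)
      _ = P := Localization.AtPrime.under_maximalIdeal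
  have hPq : q.comap (algebraMap R (Localization.AtPrime P)) = P :=
    hP.out.eq_of_le ⟨hq.comap _, hle⟩ hge
  calc maximalIdeal (Localization.AtPrime P)
    _ = (q.comap (algebraMap R (Localization.AtPrime P))).map _ := by
        rw [hPq, Localization.AtPrime.map_eq_maximalIdeal]
    _ ≤ q := Ideal.map_comap_le

lemma lmult_eq_length (p : PrimeSpectrum R) (M : Type*) [AddCommGroup M] [Module R M] :
    lmult p M = Module.length (Localization.AtPrime p.asIdeal)
      (powTorsion (maximalIdeal (Localization.AtPrime p.asIdeal))
        (LocalizedModule p.asIdeal.primeCompl M)) := by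
  have : pTorsion p.asIdeal M = powTorsion (maximalIdeal (Localization.AtPrime p.asIdeal))
      (LocalizedModule p.asIdeal.primeCompl M) := by
    rw [← Localization.AtPrime.map_eq_maximalIdeal]; rfl
  rw [lmult, modLength, this, Module.coe_length]

lemma lmult_eq_of_exact (p : PrimeSpectrum R) {ι : N →ₗ[R] M} {f : M →ₗ[R] Q}
    (hf : Function.Surjective f) (hexact : Function.Exact ι f) (hp : p ∉ Module.support R N) :
    lmult p M = lmult p Q := by
  rw [Module.notMem_support_iff] at hp
  set S := p.asIdeal.primeCompl
  set φ := LocalizedModule.map S f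
  have hexactₚ : Function.Exact (LocalizedModule.map S ι) φ :=
    LocalizedModule.map_exact S ι f hexact
  have hφ : Function.Injective φ := by
    rw [← LinearMap.ker_eq_bot, LinearMap.exact_iff.mp hexactₚ, LinearMap.range_eq_bot]
    exact Subsingleton.elim _ _
  have hbij : Function.Bijective
      (φ.restrict (mapsTo_powTorsion (maximalIdeal (Localization.AtPrime p.asIdeal)) φ)) :=
    ⟨fun x y h ↦ Subtype.ext (hφ (congrArg Subtype.val h)),
      surjective_restrict_powTorsion _ (LocalizedModule.map_surjective S f hf) (k := 0)
        (by rw [LinearMap.ker_eq_bot.mpr hφ]; exact bot_le)⟩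
  rw [lmult_eq_length, lmult_eq_length, (LinearEquiv.ofBijective _ hbij).length_eq]

lemma lmult_lt_of_exact [IsNoetherianRing R] [Module.Finite R M] (p : PrimeSpectrum R)
    {ι : N →ₗ[R] M} {f : M →ₗ[R] Q} (hι : Function.Injective ι) (hf : Function.Surjective f)
    (hexact : Function.Exact ι f) (hp : p ∈ Module.support R N) {k : ℕ}
    (hk : maximalIdeal (Localization.AtPrime p.asIdeal) ^ k ≤ Module.annihilator
      (Localization.AtPrime p.asIdeal) (LocalizedModule p.asIdeal.primeCompl N)) :
    lmult p Q < lmult p M := by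
  rw [Module.mem_support_iff] at hp
  set S := p.asIdeal.primeCompl
  set ιₚ := LocalizedModule.map S ι
  set φ := LocalizedModule.map S f
  have hexactₚ : Function.Exact ιₚ φ := LocalizedModule.map_exact S ι f hexact
  have hker : LinearMap.ker φ = LinearMap.range ιₚ := LinearMap.exact_iff.mp hexactₚ
  have hkill : LinearMap.ker φ ≤ torsionBySet _ _
      ↑(maximalIdeal (Localization.AtPrime p.asIdeal) ^ k) := by
    rw [hker]
    rintro _ ⟨w, rfl⟩
    rw [mem_torsionBySet_iff]
    rintro ⟨a, ha⟩
    rw [← map_smul, Module.mem_annihilator.mp (hk ha), map_zero]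
  have hne : LinearMap.ker φ ≠ ⊥ := by
    obtain ⟨w, hw⟩ := exists_ne (0 : LocalizedModule S N)
    rw [hker, Submodule.ne_bot_iff]
    exact ⟨ιₚ w, LinearMap.mem_range_self _ _,
      fun h ↦ hw (LocalizedModule.map_injective S ι hι (h.trans (map_zero _).symm))⟩
  have := isArtinian_powTorsion_maximalIdeal (A := Localization.AtPrime p.asIdeal)
    (X := LocalizedModule S M)
  rw [lmult_eq_length, lmult_eq_length]
  exact_mod_cast Module.length_lt_of_surjective
    (surjective_restrict_powTorsion _ (LocalizedModule.map_surjective S f hf) hkill)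
    (ker_restrict_powTorsion_ne_bot _ (hkill.trans (torsionBySet_pow_le_powTorsion _ k)) hne)

end Localization

theorem lmult_lt_of_surjective_not_injective_general {R : Type*} [CommRing R] [IsNoetherianRing R]
    {M Q : Type*} [AddCommGroup M] [Module R M] [Module.Finite R M]
    [AddCommGroup Q] [Module R Q]
    (f : M →ₗ[R] Q) (hsurj : Function.Surjective f) (hinj : ¬ Function.Injective f) :
    ∃ p : PrimeSpectrum R, p.asIdeal ∈ associatedPrimes R M ∧
      lmult p Q < lmult p M ∧
      ∀ q : PrimeSpectrum R, q ∉ Module.support R (LinearMap.ker f) →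
        lmult q M = lmult q Q := by
  set N := LinearMap.ker f
  have : Nontrivial N := nontrivial_iff_ne_bot.mpr (mt LinearMap.ker_eq_bot.mp hinj)
  obtain ⟨P, hP⟩ := Ideal.nonempty_minimalPrimes
    ((Module.annihilator_eq_top_iff (R := R) (M := N)).not.mpr (not_subsingleton N))
  have : P.IsPrime := hP.1.1
  obtain ⟨k, hk⟩ := exists_maximalIdeal_pow_le_annihilator_localizedModule hP
  have hsupp : ⟨P, this⟩ ∈ Module.support R N := by
    rw [Module.support_eq_zeroLocus]; exact hP.1.2
  exact ⟨⟨P, this⟩, associatedPrimes.subset_of_injective N.injective_subtype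
      (Module.associatedPrimes.minimalPrimes_annihilator_subset_associatedPrimes R N hP),
    lmult_lt_of_exact _ N.injective_subtype hsurj f.exact_subtype_ker_map hsupp hk,
    fun q hq ↦ lmult_eq_of_exact q hsurj f.exact_subtype_ker_map hq⟩

/-- If `f : M → Q` is a surjective but not injective map of finitely generated modules over
a commutative Noetherian ring, then there is an associated prime `𝔭` of `M` at which the
local multiplicity of `Q` is strictly smaller than that of `M`, while at every prime outside
the support of `ker f` the local multiplicities of `M` and `Q` agree. -/
theorem lmult_lt_of_surjective_not_injective {R : Type*} [CommRing R] [IsNoetherianRing R]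
    {M Q : Type*} [AddCommGroup M] [Module R M] [Module.Finite R M]
    [AddCommGroup Q] [Module R Q] [Module.Finite R Q]
    (f : M →ₗ[R] Q) (hsurj : Function.Surjective f) (hinj : ¬ Function.Injective f) :
    ∃ p : PrimeSpectrum R, p.asIdeal ∈ associatedPrimes R M ∧
      lmult p Q < lmult p M ∧
      ∀ q : PrimeSpectrum R, q ∉ Module.support R (LinearMap.ker f) →
        lmult q M = lmult q Q :=
  lmult_lt_of_surjective_not_injective_general f hsurj hinj
end

section
/- Let R be a commutative Noetherian ring and 0 → N → M → Q → 0 a short exact sequence of finitely generated R-modules, where M has no embedded primes (every associated prime of M is minimal in its support). Then for every associated prime 𝔭 of M, ℓ_𝔭(M) = ℓ_𝔭(N) + ℓ_𝔭(Q), and for every prime 𝔭 not associated to M, ℓ_𝔭(N) + ℓ_𝔭(Q) ≥ ℓ_𝔭(M) with the difference supported on Ass(Q) \ Ass(M). -/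
/-!
At an associated prime `𝔭` of `M`, the hypothesis makes `𝔭` minimal over `Ann M`, so `M_𝔭`, and
with it `N_𝔭` and `(M/N)_𝔭`, is killed by a power of `𝔭R_𝔭`. The `𝔭`-torsion is then the whole
localization, and additivity is that of length along the localized exact sequence.

At any other prime, a nonzero `𝔭`-torsion element of a localization has an associated prime
containing a power of `𝔭R_𝔭`, i.e. equal to `𝔭R_𝔭`, which pulls back to `𝔭 ∈ Ass`. Hence
`ℓ_𝔭(M) = ℓ_𝔭(N) = 0` (as `Ass N ⊆ Ass M`), and `ℓ_𝔭(M/N) ≠ 0` forces `𝔭 ∈ Ass(M/N)`.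
-/

open IsLocalRing

section pTorsion

variable {R : Type*} [CommRing R] (p : Ideal R) [p.IsPrime] {M : Type*} [AddCommGroup M]
  [Module R M]

lemma mem_pTorsion_iff {x : LocalizedModule p.primeCompl M} :
    x ∈ pTorsion p M ↔
      ∃ n : ℕ, ∀ a ∈ maximalIdeal (Localization.AtPrime p) ^ n, a • x = 0 := by
  rw [pTorsion, Localization.AtPrime.map_eq_maximalIdeal, Submodule.mem_iSup_of_directed]
  · simp only [Submodule.mem_torsionBySet_iff, Subtype.forall, SetLike.mem_coe]
  · exact Monotone.directed_le fun _ _ hab =>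
      Submodule.torsionBySet_le_torsionBySet_of_subset (Ideal.pow_le_pow_right hab)

lemma pTorsion_eq_top_of_pow_le_annihilator {n : ℕ}
    (h : maximalIdeal (Localization.AtPrime p) ^ n ≤
      Module.annihilator (Localization.AtPrime p) (LocalizedModule p.primeCompl M)) :
    pTorsion p M = ⊤ :=
  Submodule.eq_top_iff'.2 fun x =>
    (mem_pTorsion_iff p).2 ⟨n, fun _ ha => Module.mem_annihilator.1 (h ha) x⟩

open Module.associatedPrimes in
lemma mem_associatedPrimes_of_pTorsion_ne_bot [IsNoetherianRing R] (h : pTorsion p M ≠ ⊥) :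
    p ∈ associatedPrimes R M := by
  have : IsNoetherianRing (Localization.AtPrime p) :=
    IsLocalization.isNoetherianRing p.primeCompl _ ‹_›
  obtain ⟨x, hx, hx0⟩ := (Submodule.ne_bot_iff _).1 h
  obtain ⟨n, hn⟩ := (mem_pTorsion_iff p).1 hx
  obtain ⟨P, hP, hxP⟩ :=
    exists_le_isAssociatedPrime_of_isNoetherianRing (Localization.AtPrime p) x hx0
  have hPmax : P = maximalIdeal (Localization.AtPrime p) :=
    le_antisymm (le_maximalIdeal hP.isPrime.ne_top) <| hP.isPrime.le_of_pow_le fun a ha =>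
      hxP (Submodule.mem_colon_singleton.2 ((Submodule.mem_bot _).2 (hn a ha)))
  have hPR := comap_mem_associatedPrimes_of_mem_associatedPrimes_of_isLocalizedModule_of_fg
    p.primeCompl (LocalizedModule.mkLinearMap p.primeCompl M) P hP (IsNoetherian.noetherian _)
  rwa [hPmax, ← Ideal.under_def, Localization.AtPrime.under_maximalIdeal] at hPR

end pTorsion

lemma algebraMap_mem_annihilator_localizedModule {R : Type*} [CommRing R] (S : Submonoid R)
    {M : Type*} [AddCommGroup M] [Module R M] {r : R} (hr : r ∈ Module.annihilator R M) :
    algebraMap R (Localization S) r ∈ Module.annihilator (Localization S) (LocalizedModule S M) :=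
  Module.mem_annihilator.2 fun x => by
    induction x using LocalizedModule.induction_on with
    | h m s => rw [algebraMap_smul, LocalizedModule.smul'_mk, Module.mem_annihilator.1 hr,
        LocalizedModule.zero_mk]

lemma exists_pow_maximalIdeal_le_annihilator_localizedModule {R : Type*} [CommRing R]
    [IsNoetherianRing R] (p : Ideal R) [p.IsPrime] {M : Type*} [AddCommGroup M] [Module R M]
    (hp : p ∈ (Module.annihilator R M).minimalPrimes) :
    ∃ n : ℕ, maximalIdeal (Localization.AtPrime p) ^ n ≤
      Module.annihilator (Localization.AtPrime p) (LocalizedModule p.primeCompl M) := by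
  have : IsNoetherianRing (Localization.AtPrime p) :=
    IsLocalization.isNoetherianRing p.primeCompl _ ‹_›
  refine Ideal.exists_pow_le_of_le_radical_of_fg ?_ (IsNoetherian.noetherian _)
  rw [Ideal.radical_eq_sInf]
  refine le_sInf fun Q ⟨hannQ, hQ⟩ => ?_
  have hQp : Q.under R ≤ p := by
    simpa only [Localization.AtPrime.under_maximalIdeal] using
      Ideal.comap_mono (f := algebraMap R (Localization.AtPrime p)) (le_maximalIdeal hQ.ne_top)
  have hannQp : Module.annihilator R M ≤ Q.under R :=
    fun r hr => hannQ (algebraMap_mem_annihilator_localizedModule _ hr)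
  have hQ_eq : Q.under R = p := le_antisymm hQp (hp.2 ⟨hQ.comap _, hannQp⟩ hQp)
  exact (Localization.AtPrime.eq_maximalIdeal_iff_under_eq.1 hQ_eq).ge

section lmult

variable {R : Type*} [CommRing R] (p : PrimeSpectrum R) {M : Type*} [AddCommGroup M] [Module R M]

lemma lmult_eq_length_s11 :
    lmult p M = Module.length (Localization.AtPrime p.asIdeal) (pTorsion p.asIdeal M) :=
  (Module.coe_length _ _).symm

lemma lmult_eq_zero_of_notMem_associatedPrimes [IsNoetherianRing R]
    (hp : p.asIdeal ∉ associatedPrimes R M) : lmult p M = 0 := by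
  have : Subsingleton (pTorsion p.asIdeal M) := Submodule.subsingleton_iff_eq_bot.2 <|
    not_imp_comm.1 (mem_associatedPrimes_of_pTorsion_ne_bot p.asIdeal) hp
  rw [lmult_eq_length_s11, Module.length_eq_zero, WithBot.coe_zero]

lemma lmult_eq_length_localizedModule {n : ℕ}
    (h : maximalIdeal (Localization.AtPrime p.asIdeal) ^ n ≤ Module.annihilator
      (Localization.AtPrime p.asIdeal) (LocalizedModule p.asIdeal.primeCompl M)) :
    lmult p M =
      Module.length (Localization.AtPrime p.asIdeal) (LocalizedModule p.asIdeal.primeCompl M) := by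
  rw [lmult_eq_length_s11, pTorsion_eq_top_of_pow_le_annihilator _ h, Submodule.topEquiv.length_eq]

lemma lmult_eq_add_of_pow_le_annihilator (N : Submodule R M) {n : ℕ}
    (h : maximalIdeal (Localization.AtPrime p.asIdeal) ^ n ≤ Module.annihilator
      (Localization.AtPrime p.asIdeal) (LocalizedModule p.asIdeal.primeCompl M)) :
    lmult p M = lmult p N + lmult p (M ⧸ N) := by
  set S := p.asIdeal.primeCompl
  have hinj := LocalizedModule.map_injective S N.subtype N.injective_subtype
  have hsurj := LocalizedModule.map_surjective S N.mkQ N.mkQ_surjective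
  rw [lmult_eq_length_localizedModule p h,
    lmult_eq_length_localizedModule p (h.trans (LinearMap.annihilator_le_of_injective _ hinj)),
    lmult_eq_length_localizedModule p (h.trans (LinearMap.annihilator_le_of_surjective _ hsurj))]
  exact_mod_cast Module.length_eq_add_of_exact _ _ hinj hsurj
    (LocalizedModule.map_exact S _ _ (LinearMap.exact_subtype_mkQ N))

end lmult

theorem lmult_semiadditive_general {R : Type*} [CommRing R] [IsNoetherianRing R]
    {M : Type*} [AddCommGroup M] [Module R M]
    (N : Submodule R M)
    (hM : ∀ p ∈ associatedPrimes R M, p ∈ (Module.annihilator R M).minimalPrimes) :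
    (∀ p : PrimeSpectrum R, p.asIdeal ∈ associatedPrimes R M →
      lmult p M = lmult p N + lmult p (M ⧸ N)) ∧
    (∀ p : PrimeSpectrum R, p.asIdeal ∉ associatedPrimes R M →
      lmult p M ≤ lmult p N + lmult p (M ⧸ N) ∧
      (lmult p N + lmult p (M ⧸ N) ≠ lmult p M →
        p.asIdeal ∈ associatedPrimes R (M ⧸ N) \ associatedPrimes R M)) := by
  refine ⟨fun p hp => ?_, fun p hp => ?_⟩
  · obtain ⟨n, hn⟩ := exists_pow_maximalIdeal_le_annihilator_localizedModule p.asIdeal (hM _ hp)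
    exact lmult_eq_add_of_pow_le_annihilator p N hn
  · have hNp : p.asIdeal ∉ associatedPrimes R N :=
      fun h => hp (associatedPrimes.subset_of_injective N.injective_subtype h)
    rw [lmult_eq_zero_of_notMem_associatedPrimes p hp,
      lmult_eq_zero_of_notMem_associatedPrimes p hNp, zero_add]
    refine ⟨by simp [lmult_eq_length_s11], fun hQ => ⟨?_, hp⟩⟩
    exact not_imp_comm.1 (lmult_eq_zero_of_notMem_associatedPrimes p) hQ

/-- Semi-additivity of the fundamental cycle: for a short exact sequence
`0 → N → M → M/N → 0` with `M` having no embedded primes (every associated prime of `M`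
is minimal over the annihilator of `M`), the local multiplicities are additive at every
associated prime of `M`, and at the other primes `ℓ_𝔭(N) + ℓ_𝔭(M/N) ≥ ℓ_𝔭(M)`, with strict
inequality only at primes in `Ass(M/N) \ Ass(M)`. -/
theorem lmult_semiadditive {R : Type*} [CommRing R] [IsNoetherianRing R]
    {M : Type*} [AddCommGroup M] [Module R M] [Module.Finite R M]
    (N : Submodule R M)
    (hM : ∀ p ∈ associatedPrimes R M, p ∈ (Module.annihilator R M).minimalPrimes) :
    (∀ p : PrimeSpectrum R, p.asIdeal ∈ associatedPrimes R M →
      lmult p M = lmult p N + lmult p (M ⧸ N)) ∧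
    (∀ p : PrimeSpectrum R, p.asIdeal ∉ associatedPrimes R M →
      lmult p M ≤ lmult p N + lmult p (M ⧸ N) ∧
      (lmult p N + lmult p (M ⧸ N) ≠ lmult p M →
        p.asIdeal ∈ associatedPrimes R (M ⧸ N) \ associatedPrimes R M)) :=
  lmult_semiadditive_general N hM
end

section
/- Let R be a commutative Noetherian ring and M, N finitely generated R-modules such that dim(Supp M) < min{ dim(R/𝔮) : 𝔮 ∈ Ass(N) }. Then Hom_R(M, N) = 0. -/
/-!
If `f m ≠ 0`, some associated prime `𝔭` of `N` contains `ann (f m) ⊇ ann m`, so `𝔭 ∈ Supp M`.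
As `Supp M` is closed under specialisation, it then contains `V(𝔭) ≅ Spec (R ⧸ 𝔭)`, whence
`dim (R ⧸ 𝔭) ≤ dim Supp M`, contradicting the hypothesis.
-/

section

open Module

variable {R M N : Type*} [CommRing R] [AddCommGroup M] [Module R M] [AddCommGroup N] [Module R N]

lemma ringKrullDim_quotient_le_supportDim {p : PrimeSpectrum R} (hp : p ∈ support R M) :
    ringKrullDim (R ⧸ p.asIdeal) ≤ Order.krullDim (support R M) := by
  have hV : PrimeSpectrum.zeroLocus (p.asIdeal : Set R) ⊆ support R M :=
    fun q hq ↦ mem_support_mono ((PrimeSpectrum.mem_zeroLocus _ _).mp hq) hp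
  rw [ringKrullDim_quotient]
  exact Order.krullDim_le_of_strictMono (Set.inclusion hV) fun _ _ h ↦ h

lemma LinearMap.exists_isAssociatedPrime_mem_support [IsNoetherianRing R] {f : M →ₗ[R] N}
    (hf : f ≠ 0) : ∃ p : PrimeSpectrum R, IsAssociatedPrime p.asIdeal N ∧ p ∈ support R M := by
  obtain ⟨m, hm⟩ : ∃ m, f m ≠ 0 := by
    by_contra! h
    exact hf (LinearMap.ext h)
  obtain ⟨P, hP, hle⟩ := exists_le_isAssociatedPrime_of_isNoetherianRing R (f m) hm
  refine ⟨⟨P, hP.isPrime⟩, hP, mem_support_iff_exists_annihilator.mpr ⟨m, fun r hr ↦ hle ?_⟩⟩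
  rw [Submodule.mem_annihilator_span_singleton] at hr
  rw [Submodule.mem_colon_singleton, Submodule.mem_bot, ← map_smul, hr, map_zero]

end

theorem hom_eq_zero_of_dim_lt_general {R : Type*} [CommRing R] [IsNoetherianRing R]
    {M N : Type*} [AddCommGroup M] [Module R M]
    [AddCommGroup N] [Module R N]
    (h : ∀ q ∈ associatedPrimes R N,
      Order.krullDim (Module.support R M) < ringKrullDim (R ⧸ q)) :
    ∀ f : M →ₗ[R] N, f = 0 := by
  intro f
  by_contra hf
  obtain ⟨p, hpAss, hpSupp⟩ := f.exists_isAssociatedPrime_mem_support hf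
  exact (h p.asIdeal hpAss).not_ge (ringKrullDim_quotient_le_supportDim hpSupp)

/-- If the dimension of the support of `M` is strictly smaller than the dimension of every
associated prime of `N`, then every `R`-linear map `M → N` is zero. -/
theorem hom_eq_zero_of_dim_lt {R : Type*} [CommRing R] [IsNoetherianRing R]
    {M N : Type*} [AddCommGroup M] [Module R M] [Module.Finite R M]
    [AddCommGroup N] [Module R N] [Module.Finite R N]
    (h : ∀ q ∈ associatedPrimes R N,
      Order.krullDim (Module.support R M) < ringKrullDim (R ⧸ q)) :
    ∀ f : M →ₗ[R] N, f = 0 :=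
  hom_eq_zero_of_dim_lt_general h
end

section
/- Let M be a module over a commutative ring R and let 𝔑 be the set of endomorphisms of M whose kernel is an essential submodule of M. If M is Noetherian, then 𝔑 is a two-sided ideal of End_R(M) consisting of nilpotent endomorphisms. (Key steps: the kernel of a sum or composite with elements of 𝔑 is again essential; and if ker(aⁿ) = ker(aⁿ⁺¹) and ker(aⁿ) is essential, then aⁿ = 0... in fact Im(aⁿ) = 0, so a is nilpotent.) -/
/-!
An endomorphism `a` with essential kernel stays in that class under composition on either side
(for `x * a` the kernel only grows, for `a * y` it is the preimage `y⁻¹(ker a)`, and preimages of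
essential submodules are essential) and under sums (the intersection of two essential submodules is
essential). For nilpotency, Noetherianity gives `n ≥ 1` with `ker aⁿ ⊓ range aⁿ = 0`; since
`ker aⁿ ⊇ ker a` is essential, this forces `range aⁿ = 0`.
-/

open Filter

def Submodule.IsEssential {R M : Type*} [Semiring R] [AddCommMonoid M] [Module R M]
    (N : Submodule R M) : Prop :=
  ∀ H : Submodule R M, H ≠ ⊥ → N ⊓ H ≠ ⊥

namespace Submodule.IsEssential

variable {R M M₂ : Type*} [Semiring R] [AddCommMonoid M] [Module R M] [AddCommMonoid M₂]
  [Module R M₂] {N P : Submodule R M}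

theorem top : (⊤ : Submodule R M).IsEssential := fun H hH => by rwa [top_inf_eq]

theorem mono (hN : N.IsEssential) (hNP : N ≤ P) : P.IsEssential := fun H hH =>
  ne_bot_of_le_ne_bot (hN H hH) (inf_le_inf_right H hNP)

theorem inf (hN : N.IsEssential) (hP : P.IsEssential) : (N ⊓ P).IsEssential := fun H hH => by
  rw [inf_assoc]
  exact hN _ (hP H hH)

theorem eq_bot_of_disjoint (hN : N.IsEssential) (hNP : Disjoint N P) : P = ⊥ := by
  by_contra hP
  exact hN P hP hNP.eq_bot

theorem comap {N : Submodule R M₂} (hN : N.IsEssential) (f : M →ₗ[R] M₂) :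
    (N.comap f).IsEssential := by
  intro H hH
  by_cases hfH : H.map f = ⊥
  · have hH_le : H ≤ N.comap f := Submodule.map_le_iff_le_comap.mp (hfH ▸ bot_le)
    rwa [inf_eq_right.mpr hH_le]
  · obtain ⟨_, ⟨hxN, x, hxH, rfl⟩, hfx⟩ := (Submodule.ne_bot_iff _).mp (hN _ hfH)
    refine (Submodule.ne_bot_iff _).mpr ⟨x, ⟨hxN, hxH⟩, ?_⟩
    rintro rfl
    exact hfx (map_zero f)

end Submodule.IsEssential

section EssentialKer

variable (R M : Type*) [Ring R] [AddCommGroup M] [Module R M]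

def Module.End.essentialKerIdeal : TwoSidedIdeal (Module.End R M) :=
  TwoSidedIdeal.mk' {a | (LinearMap.ker a).IsEssential}
    (by simpa using Submodule.IsEssential.top)
    (fun hx hy => (hx.inf hy).mono fun _ h => by simp_all)
    (fun hx => by simpa using hx)
    (fun hy => hy.mono (LinearMap.ker_le_ker_comp _ _))
    (fun {_ y} hx => by simpa [Module.End.mul_eq_comp, LinearMap.ker_comp] using hx.comap y)

variable {R M}

theorem Module.End.mem_essentialKerIdeal {a : Module.End R M} :
    a ∈ essentialKerIdeal R M ↔ (LinearMap.ker a).IsEssential :=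
  TwoSidedIdeal.mem_mk' _ _ _ _ _ _ a

theorem Module.End.isNilpotent_of_isEssential_ker [IsNoetherian R M] {a : Module.End R M}
    (ha : (LinearMap.ker a).IsEssential) : IsNilpotent a := by
  obtain ⟨n, hdisj, hn⟩ :=
    (a.eventually_disjoint_ker_pow_range_pow.and (eventually_ge_atTop 1)).exists
  have hker : (LinearMap.ker (a ^ n)).IsEssential := by
    rw [← Nat.sub_add_cancel hn, pow_succ, Module.End.mul_eq_comp]
    exact ha.mono (LinearMap.ker_le_ker_comp _ _)
  exact ⟨n, LinearMap.range_eq_bot.mp (hker.eq_bot_of_disjoint hdisj)⟩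

end EssentialKer

/-- For a Noetherian module `M` over a commutative ring, the set of endomorphisms of `M`
whose kernel is an essential submodule (meets every nonzero submodule nontrivially) forms a
two-sided ideal of `End_R(M)` consisting of nilpotent endomorphisms. -/
theorem essential_ker_twoSidedIdeal_nilpotent {R M : Type*} [CommRing R] [AddCommGroup M]
    [Module R M] [IsNoetherian R M] :
    ∃ I : TwoSidedIdeal (Module.End R M),
      (∀ a : Module.End R M,
        a ∈ I ↔ ∀ H : Submodule R M, H ≠ ⊥ → LinearMap.ker a ⊓ H ≠ ⊥) ∧
      ∀ a ∈ I, IsNilpotent a :=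
  ⟨Module.End.essentialKerIdeal R M, fun _ => Module.End.mem_essentialKerIdeal,
    fun _ ha => Module.End.isNilpotent_of_isEssential_ker (Module.End.mem_essentialKerIdeal.mp ha)⟩
end
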